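/- For every integer r ≥ 0 and all positive integers a and b, the following identity holds: Σ_{i=0}^{r} binom(2r, i) · binom(2r − i, r) · (r+1)^i · a^{2r−i} · b^i = (r+1) · C_r · a^r · (a + (r+1)b)^r, where C_r = binom(2r,r)/(r+1) is the Catalan number. -/

import Mathlib

open Finset

theorem Nat.choose_mul_choose_sub_sub {n k i : ℕ} (hik : i ≤ k) (hkn : k ≤ n) :
    n.choose i * (n - i).choose (n - k) = n.choose k * k.choose i := by
  rw [Nat.choose_mul hik, ← Nat.choose_symm (by omega : k - i ≤ n - i)]
  congr 2
  omega

/-- Since `(2r choose i) (2r - i choose r) = (2r choose r) (r choose i)`, the left-hand side is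
`(2r choose r) a^r` times the binomial expansion of `(a + (r+1) b)^r`. -/
theorem sum_choose_mul_choose_mul_pow {R : Type*} [CommSemiring R] (r : ℕ) (a b : R) :
    ∑ i ∈ range (r + 1),
      ((2 * r).choose i * (2 * r - i).choose r : R) * (r + 1) ^ i * a ^ (2 * r - i) * b ^ i =
    r.centralBinom * a ^ r * (a + (r + 1) * b) ^ r := by
  rw [add_comm a, add_pow, mul_sum]
  refine sum_congr rfl fun i hi => ?_
  have hir : i ≤ r := Nat.lt_succ_iff.mp (mem_range.mp hi)
  have hchoose : (2 * r).choose i * (2 * r - i).choose r = r.centralBinom * r.choose i := by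
    simpa [Nat.centralBinom, two_mul] using
      Nat.choose_mul_choose_sub_sub (n := 2 * r) hir (by omega)
  have hpow : a ^ (2 * r - i) = a ^ r * a ^ (r - i) := by
    rw [← pow_add]; congr 1; omega
  rw [← Nat.cast_mul, hchoose, hpow, mul_pow]
  push_cast
  ring

theorem stmt14 (r a b : ℕ) :
    ∑ i ∈ Finset.range (r + 1),
      Nat.choose (2 * r) i * Nat.choose (2 * r - i) r * (r + 1) ^ i *
        a ^ (2 * r - i) * b ^ i =
    (r + 1) * catalan r * a ^ r * (a + (r + 1) * b) ^ r := by
  rw [succ_mul_catalan_eq_centralBinom]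
  simpa using sum_choose_mul_choose_mul_pow r a b
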